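/- Under the hypotheses of the transformation rule L̄^i_{jk} = L^i_{jk} + δ^i_j ψ_k + δ^i_k ψ_j + (f̄^i_j σ̄_k + f̄^i_k σ̄_j) - (f^i_j σ_k + f^i_k σ_j) + (φ̄^i_{jk} - φ^i_{jk}) (with φ, φ̄ symmetric in the lower indices, ψ_k = ū_k - u_k), the generalized Thomas object T(L,f,σ,φ)^i_{jk} = L^i_{jk} - (f^i_j σ_k + f^i_k σ_j) - φ^i_{jk} - (1/(N+1)) { δ^i_j [Σ_α L^α_{kα} - (Σ_α f^α_k σ_α + f σ_k) - Σ_α φ^α_{kα}] + δ^i_k [Σ_α L^α_{jα} - (Σ_α f^α_j σ_α + f σ_j) - Σ_α φ^α_{jα}] } satisfies T(L̄, f̄, σ̄, φ̄)^i_{jk} = T(L, f, σ, φ)^i_{jk} for all i, j, k. -/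

import Mathlib

/-!
The generalized Thomas object is Thomas' projective parameter of the deformed connection
`P = L - (f σ + f σ) - φ`: the contraction `Σ_α (f^α_k σ_α + f^α_α σ_k)` in its trace part is exactly
the trace of the `f σ` term. The transformation rule says that `P` undergoes a projective change
`P + δ ψ + δ ψ` with `ψ = u' - u`, whose trace grows by `(N + 1) ψ`; this is precisely cancelled by
the normalization `1 / (N + 1)`.
-/

/-- The generalized Thomas object for the factored deformation. -/
noncomputable def genThomas {N : ℕ}
    (L : Fin N → Fin N → Fin N → ℝ) (f : Fin N → Fin N → ℝ)
    (σ : Fin N → ℝ) (φ : Fin N → Fin N → Fin N → ℝ)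
    (i j k : Fin N) : ℝ :=
  L i j k - (f i j * σ k + f i k * σ j) - φ i j k -
    (1 / (N + 1 : ℝ)) *
      ((if i = j then (1:ℝ) else 0) *
        ((∑ α : Fin N, L α k α) -
         ((∑ α : Fin N, f α k * σ α) + (∑ α : Fin N, f α α) * σ k) -
         (∑ α : Fin N, φ α k α)) +
       (if i = k then (1:ℝ) else 0) *
        ((∑ α : Fin N, L α j α) -
         ((∑ α : Fin N, f α j * σ α) + (∑ α : Fin N, f α α) * σ j) -
         (∑ α : Fin N, φ α j α)))

open Finset

section ProjectiveParameter

variable {ι K : Type*} [Fintype ι] [DecidableEq ι] [Field K]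

def thomasParam (P : ι → ι → ι → K) (i j k : ι) : K :=
  P i j k - 1 / (Fintype.card ι + 1 : K) *
    ((if i = j then 1 else 0) * ∑ α, P α k α + (if i = k then 1 else 0) * ∑ α, P α j α)

def projectiveChange (P : ι → ι → ι → K) (ψ : ι → K) (i j k : ι) : K :=
  P i j k + (if i = j then 1 else 0) * ψ k + (if i = k then 1 else 0) * ψ j

theorem sum_projectiveChange_trace (P : ι → ι → ι → K) (ψ : ι → K) (m : ι) :
    ∑ α, projectiveChange P ψ α m α = ∑ α, P α m α + (Fintype.card ι + 1) * ψ m := by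
  simp only [projectiveChange, sum_add_distrib, ite_mul, one_mul, zero_mul, sum_ite_eq',
    mem_univ, if_true, sum_const, card_univ, nsmul_eq_mul]
  ring

theorem thomasParam_projectiveChange [CharZero K] (P : ι → ι → ι → K) (ψ : ι → K) :
    thomasParam (projectiveChange P ψ) = thomasParam P := by
  funext i j k
  have hcard : (Fintype.card ι + 1 : K) ≠ 0 := Nat.cast_add_one_ne_zero _
  rw [thomasParam, thomasParam, sum_projectiveChange_trace, sum_projectiveChange_trace,
    projectiveChange]
  field_simp
  ring

end ProjectiveParameter

theorem genThomas_eq_thomasParam {N : ℕ} (L : Fin N → Fin N → Fin N → ℝ) (f : Fin N → Fin N → ℝ)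
    (σ : Fin N → ℝ) (φ : Fin N → Fin N → Fin N → ℝ) :
    genThomas L f σ φ = thomasParam fun i j k => L i j k - (f i j * σ k + f i k * σ j) - φ i j k := by
  funext i j k
  simp only [genThomas, thomasParam, Fintype.card_fin, sum_sub_distrib, sum_add_distrib, ← sum_mul]

theorem stmt_7_general (N : ℕ)
    (L L' : Fin N → Fin N → Fin N → ℝ)
    (f f' : Fin N → Fin N → ℝ)
    (σ σ' u u' : Fin N → ℝ)
    (φ φ' : Fin N → Fin N → Fin N → ℝ)
    (htrans : ∀ i j k, L' i j k = L i j k +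
      (if i = j then (1:ℝ) else 0) * (u' k - u k) +
      (if i = k then (1:ℝ) else 0) * (u' j - u j) +
      ((f' i j * σ' k + f' i k * σ' j) - (f i j * σ k + f i k * σ j)) +
      (φ' i j k - φ i j k)) :
    ∀ i j k, genThomas L' f' σ' φ' i j k = genThomas L f σ φ i j k := by
  have hdeformed : (fun i j k => L' i j k - (f' i j * σ' k + f' i k * σ' j) - φ' i j k) =
      projectiveChange (fun i j k => L i j k - (f i j * σ k + f i k * σ j) - φ i j k)
        (u' - u) := by
    funext i j k
    simp only [htrans, projectiveChange, Pi.sub_apply]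
    ring
  intro i j k
  rw [genThomas_eq_thomasParam, genThomas_eq_thomasParam, hdeformed, thomasParam_projectiveChange]

theorem stmt_7 (N : ℕ) (hN : 0 < N)
    (L L' : Fin N → Fin N → Fin N → ℝ)
    (hL : ∀ i j k, L i j k = L i k j)
    (hL' : ∀ i j k, L' i j k = L' i k j)
    (f f' : Fin N → Fin N → ℝ)
    (σ σ' u u' : Fin N → ℝ)
    (φ φ' : Fin N → Fin N → Fin N → ℝ)
    (hφ : ∀ i j k, φ i j k = φ i k j)
    (hφ' : ∀ i j k, φ' i j k = φ' i k j)
    (htrans : ∀ i j k, L' i j k = L i j k +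
      (if i = j then (1:ℝ) else 0) * (u' k - u k) +
      (if i = k then (1:ℝ) else 0) * (u' j - u j) +
      ((f' i j * σ' k + f' i k * σ' j) - (f i j * σ k + f i k * σ j)) +
      (φ' i j k - φ i j k)) :
    ∀ i j k, genThomas L' f' σ' φ' i j k = genThomas L f σ φ i j k :=
  stmt_7_general N L L' f f' σ σ' u u' φ φ' htrans
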